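/- arXiv:math/0211213 — 4 statements merged into one kernel-verified Lean document; each statement's English description precedes it below -/
import Mathlib

section
/- If π avoids 4231 but contains 42513, then it contains an occurrence m_i b m_j a c of 42513 in which m_i and m_j are left-to-right maxima of π. -/
def PermContains {n k : ℕ} (π : Equiv.Perm (Fin n)) (σ : Fin k → Fin k) : Prop :=
  ∃ f : Fin k → Fin n, StrictMono f ∧ ∀ a b : Fin k, σ a < σ b ↔ π (f a) < π (f b)

def PermAvoids {n k : ℕ} (π : Equiv.Perm (Fin n)) (σ : Fin k → Fin k) : Prop :=
  ¬ PermContains π σ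

def IsLtrMax {n : ℕ} (π : Equiv.Perm (Fin n)) (i : Fin n) : Prop :=
  ∀ h : Fin n, h < i → π h < π i

/-- If `π` avoids 4231 but contains 42513 (pattern `d b e a c`), then it contains an
occurrence `m_i b m_j a c` of 42513 in which the entries playing the roles of the
'4' and the '5' are left-to-right maxima of `π`. -/
theorem contains_42513_with_ltr_maxima {n : ℕ} (π : Equiv.Perm (Fin n))
    (havoid : PermAvoids π (![3,1,2,0] : Fin 4 → Fin 4))
    (hcont : PermContains π (![3,1,4,0,2] : Fin 5 → Fin 5)) :
    ∃ f : Fin 5 → Fin n, StrictMono f ∧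
      (∀ a b : Fin 5, (![3,1,4,0,2] : Fin 5 → Fin 5) a < ![3,1,4,0,2] b ↔ π (f a) < π (f b)) ∧
      IsLtrMax π (f 0) ∧ IsLtrMax π (f 2) := by
  obtain ⟨f, hmono, hiff⟩ := hcont
  -- value chain: π f3 < π f1 < π f4 < π f0 < π f2
  have v31 : π (f 3) < π (f 1) := (hiff 3 1).mp (by decide)
  have v14 : π (f 1) < π (f 4) := (hiff 1 4).mp (by decide)
  have v40 : π (f 4) < π (f 0) := (hiff 4 0).mp (by decide)
  have v02 : π (f 0) < π (f 2) := (hiff 0 2).mp (by decide)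
  have p01 : f 0 < f 1 := hmono (by decide)
  have p12 : f 1 < f 2 := hmono (by decide)
  have p23 : f 2 < f 3 := hmono (by decide)
  have p34 : f 3 < f 4 := hmono (by decide)
  -- m2 : argmax of π over Iic (f 2)
  obtain ⟨m2, hm2mem, hm2max⟩ :=
    (Finset.Iic (f 2)).exists_max_image (fun x => π x) ⟨f 2, Finset.mem_Iic.mpr le_rfl⟩
  have hm2le : m2 ≤ f 2 := Finset.mem_Iic.mp hm2mem
  have hm2f2 : π (f 2) ≤ π m2 := hm2max _ (Finset.mem_Iic.mpr le_rfl)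
  have hm2ltr : IsLtrMax π m2 := by
    intro h hh
    have hle : π h ≤ π m2 := hm2max _ (Finset.mem_Iic.mpr (le_trans hh.le hm2le))
    exact lt_of_le_of_ne hle (fun e => (ne_of_lt hh) (π.injective e))
  -- m2 > f 1, else 4231
  have hm2gt : f 1 < m2 := by
    by_contra hle
    push_neg at hle
    have hne : m2 ≠ f 1 := by
      intro e
      exact absurd (e ▸ hm2f2) (not_le.mpr (lt_trans v14 (lt_trans v40 v02)))
    have hm2lt1 : m2 < f 1 := lt_of_le_of_ne hle hne
    have hne2 : m2 ≠ f 2 := ne_of_lt (lt_trans hm2lt1 p12)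
    have hs : π (f 2) < π m2 := lt_of_le_of_ne hm2f2 (fun e => hne2 (π.injective e.symm))
    apply havoid
    refine ⟨![m2, f 1, f 2, f 3], ?_, ?_⟩
    · intro a b hab
      fin_cases a <;> fin_cases b <;> simp_all <;> omega
    · intro a b
      have h1 : π (f 3) < π (f 1) := v31
      have h2 : π (f 1) < π (f 2) := by
        exact lt_trans v14 (lt_trans v40 v02)
      fin_cases a <;> fin_cases b <;>
        simp [Matrix.cons_val_zero, Matrix.cons_val_one] <;> omega
  -- m0 : argmax of π over Iic (f 0)
  obtain ⟨m0, hm0mem, hm0max⟩ :=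
    (Finset.Iic (f 0)).exists_max_image (fun x => π x) ⟨f 0, Finset.mem_Iic.mpr le_rfl⟩
  have hm0le : m0 ≤ f 0 := Finset.mem_Iic.mp hm0mem
  have hm0f0 : π (f 0) ≤ π m0 := hm0max _ (Finset.mem_Iic.mpr le_rfl)
  have hm0ltr : IsLtrMax π m0 := by
    intro h hh
    have hle : π h ≤ π m0 := hm0max _ (Finset.mem_Iic.mpr (le_trans hh.le hm0le))
    exact lt_of_le_of_ne hle (fun e => (ne_of_lt hh) (π.injective e))
  have hm0lt1 : m0 < f 1 := lt_of_le_of_lt hm0le p01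
  have hm0ltm2 : m0 < m2 := lt_trans hm0lt1 hm2gt
  have hv0 : π m0 < π m2 := by
    have hle : π m0 ≤ π m2 :=
      hm2max _ (Finset.mem_Iic.mpr (le_trans hm0le (le_trans p01.le p12.le)))
    exact lt_of_le_of_ne hle (fun e => (ne_of_lt hm0ltm2) (π.injective e))
  have hv40 : π (f 4) < π m0 := lt_of_lt_of_le v40 hm0f0
  have hm2lt3 : m2 < f 3 := lt_of_le_of_lt hm2le p23
  refine ⟨![m0, f 1, m2, f 3, f 4], ?_, ?_, ?_, ?_⟩
  · intro a b hab
    fin_cases a <;> fin_cases b <;> simp_all <;> omega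
  · intro a b
    fin_cases a <;> fin_cases b <;>
      simp [Matrix.cons_val_zero, Matrix.cons_val_one] <;> omega
  · exact hm0ltr
  · exact hm2ltr
end

section
/- The unique formal power series η(t) with constant term 1 satisfying t·η(t)³ = η(t) − 1 has n-th coefficient equal to (1/n)·binom(3n, n−1) for all n ≥ 1. -/
/-!
Eliminating `t` and the derivatives by means of `t η³ = η - 1` shows that `η` satisfies the
linear equation `4t²η'' + 6tη' = t (27t²η'' + 54tη' + 6η)`, that is,
`2θ(2θ + 1) η = 3t(3θ + 1)(3θ + 2) η` for `θ = t d/dt`. Hence its coefficients obey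
`2(n+1)(2n+3) aₙ₊₁ = 3(3n+1)(3n+2) aₙ`, a recurrence also satisfied by
`binom(3n, n) / (2n + 1)`, which equals `binom(3n, n - 1) / n` for `n ≥ 1`.
-/

open PowerSeries

namespace Nat

theorem mul_choose_three_mul_succ (n : ℕ) :
    2 * (n + 1) * (2 * n + 1) * (3 * (n + 1)).choose (n + 1)
      = 3 * (3 * n + 1) * (3 * n + 2) * (3 * n).choose n := by
  have h1 := add_one_mul_choose_eq (3 * n + 2) n
  have h2 := choose_mul_succ_eq (3 * n + 1) n
  have h3 := choose_mul_succ_eq (3 * n) n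
  rw [show 3 * n + 1 + 1 - n = 2 * n + 2 by omega] at h2
  rw [show 3 * n + 1 - n = 2 * n + 1 by omega] at h3
  rw [show 3 * (n + 1) = 3 * n + 2 + 1 by ring]
  nlinarith [h1, h2, h3]

theorem succ_mul_choose_three_mul_succ (n : ℕ) :
    (n + 1) * (3 * (n + 1)).choose (n + 1) = (2 * n + 3) * (3 * (n + 1)).choose n := by
  have := choose_succ_right_eq (3 * (n + 1)) n
  rw [show 3 * (n + 1) - n = 2 * n + 3 by omega] at this
  linarith

end Nat

theorem Derivation.map_ofNat {R A M : Type*} [CommSemiring R] [CommSemiring A] [Algebra R A]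
    [AddCommMonoid M] [Module A M] [Module R M] (D : Derivation R A M) (n : ℕ) [n.AtLeastTwo] :
    D (ofNat(n) : A) = 0 :=
  D.map_natCast n

namespace PowerSeries

variable {R : Type*} [CommRing R]

theorem coeff_X_mul_derivative (f : R⟦X⟧) (n : ℕ) :
    coeff n (X * d⁄dX R f) = n * coeff n f := by
  rcases n with _ | m
  · simp
  · rw [coeff_succ_X_mul, coeff_derivative, mul_comm]
    push_cast; rfl

theorem coeff_X_sq_mul_derivative_derivative (f : R⟦X⟧) (n : ℕ) :
    coeff n (X ^ 2 * d⁄dX R (d⁄dX R f)) = n * (n - 1) * coeff n f := by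
  rcases n with _ | m
  · simp
  · rw [sq, mul_assoc, coeff_succ_X_mul, coeff_X_mul_derivative, coeff_derivative]
    push_cast; ring

end PowerSeries

section

variable {R : Type*} [CommRing R] {η : R⟦X⟧}

theorem constantCoeff_eq_one_of_X_mul_pow_three (hη : X * η ^ 3 = η - 1) :
    constantCoeff η = 1 := by
  have := congrArg constantCoeff hη
  simp only [map_mul, constantCoeff_X, zero_mul, map_sub, map_one] at this
  exact (sub_eq_zero.mp this.symm)

theorem mul_derivative_eq_pow_four_of_X_mul_pow_three (hη : X * η ^ 3 = η - 1) :
    (3 - 2 * η) * d⁄dX R η = η ^ 4 := by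
  have h := congrArg (d⁄dX R) hη
  simp only [Derivation.leibniz, Derivation.leibniz_pow, derivative_X, map_sub,
    Derivation.map_one_eq_zero, smul_eq_mul, nsmul_eq_mul] at h
  linear_combination (3 * d⁄dX R η) * hη - η * h

theorem ode_of_X_mul_pow_three (hη : X * η ^ 3 = η - 1) :
    4 * X ^ 2 * d⁄dX R (d⁄dX R η) + 6 * X * d⁄dX R η
      = X * (27 * X ^ 2 * d⁄dX R (d⁄dX R η) + 54 * X * d⁄dX R η + 6 * η) := by
  set η' := d⁄dX R η
  set η'' := d⁄dX R η'
  set D : R⟦X⟧ := 3 - 2 * η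
  have hA : D * η' = η ^ 4 := mul_derivative_eq_pow_four_of_X_mul_pow_three hη
  have hB : D * η'' = 2 * η' ^ 2 + 4 * η ^ 3 * η' := by
    have h := congrArg (d⁄dX R) hA
    simp only [D, Derivation.leibniz, Derivation.leibniz_pow, map_sub,
      Derivation.map_ofNat, smul_eq_mul, nsmul_eq_mul] at h
    linear_combination h
  have hS : D ^ 3 * η'' = 6 * η ^ 7 * (2 - η) := by
    linear_combination D ^ 2 * hB + (2 * (D * η' + η ^ 4) + 4 * η ^ 3 * D) * hA
  have hC2 : X ^ 2 * η ^ 6 = (η - 1) ^ 2 := by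
    linear_combination (X * η ^ 3 + η - 1) * hη
  have hC3 : X ^ 3 * η ^ 9 = (η - 1) ^ 3 := by
    linear_combination (X ^ 2 * η ^ 6 + X * η ^ 3 * (η - 1) + (η - 1) ^ 2) * hη
  have hu : IsUnit (η ^ 9 * D ^ 3) := by
    rw [isUnit_iff_constantCoeff]
    simp only [D, map_mul, map_pow, map_sub, map_ofNat,
      constantCoeff_eq_one_of_X_mul_pow_three hη]
    norm_num
  -- The unit turns `X` into `(η - 1) / η ^ 3` and `η'`, `η''` into rational functions of `η`
  -- (`hA`, `hS`), so the equation becomes a polynomial identity in `η`.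
  refine hu.mul_left_cancel ?_
  linear_combination (4 * X ^ 2 * η ^ 9 - 27 * X ^ 3 * η ^ 9) * hS
    + (6 * X * η ^ 9 * D ^ 2 - 54 * X ^ 2 * η ^ 9 * D ^ 2) * hA
    + (24 * η ^ 10 * (2 - η) - 54 * η ^ 7 * D ^ 2) * hC2
    + (6 * η ^ 10 * D ^ 2 - 6 * η ^ 7 * D ^ 3) * hη
    - 162 * η ^ 7 * (2 - η) * hC3

theorem coeff_succ_of_ode {f : R⟦X⟧}
    (hf : 4 * X ^ 2 * d⁄dX R (d⁄dX R f) + 6 * X * d⁄dX R f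
      = X * (27 * X ^ 2 * d⁄dX R (d⁄dX R f) + 54 * X * d⁄dX R f + 6 * f)) (n : ℕ) :
    2 * (n + 1) * (2 * n + 3) * coeff (n + 1) f = 3 * (3 * n + 1) * (3 * n + 2) * coeff n f := by
  have h := congrArg (coeff (n + 1)) hf
  simp only [map_add, mul_assoc, coeff_succ_X_mul, ← map_ofNat (C (R := R)), coeff_C_mul,
    coeff_X_sq_mul_derivative_derivative, coeff_X_mul_derivative, coeff_derivative] at h
  push_cast at h
  linear_combination h

end

theorem two_mul_add_one_mul_eq_choose {K : Type*} [CommRing K] [IsDomain K] [CharZero K]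
    {a : ℕ → K} (h0 : a 0 = 1)
    (ha : ∀ n : ℕ, 2 * (n + 1) * (2 * n + 3) * a (n + 1) = 3 * (3 * n + 1) * (3 * n + 2) * a n)
    (n : ℕ) : (2 * n + 1) * a n = (3 * n).choose n := by
  induction n with
  | zero => simp [h0]
  | succ n ih =>
    have hchoose : (2 * (n + 1) * (2 * n + 1) * (3 * (n + 1)).choose (n + 1) : K)
        = 3 * (3 * n + 1) * (3 * n + 2) * (3 * n).choose n := by
      exact_mod_cast Nat.mul_choose_three_mul_succ n
    have hne : (2 * (n + 1) * (2 * n + 1) : K) ≠ 0 := by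
      exact_mod_cast (by positivity : 2 * (n + 1) * (2 * n + 1) ≠ 0)
    refine mul_left_cancel₀ hne ?_
    push_cast
    linear_combination (2 * (n : K) + 1) * ha n + 3 * (3 * n + 1) * (3 * n + 2) * ih - hchoose

theorem ternary_tree_coeff_general (η : PowerSeries ℚ)
    (hη : PowerSeries.X * η ^ 3 = η - 1) :
    ∀ n : ℕ, 1 ≤ n →
      PowerSeries.coeff n η = (Nat.choose (3 * n) (n - 1) : ℚ) / n := by
  rintro (_ | n) hn
  · omega
  have h0 : coeff 0 η = 1 := by
    rw [coeff_zero_eq_constantCoeff_apply, constantCoeff_eq_one_of_X_mul_pow_three hη]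
  have hclosed := two_mul_add_one_mul_eq_choose (a := fun k => coeff k η) h0
    (coeff_succ_of_ode (ode_of_X_mul_pow_three hη)) (n + 1)
  have hchoose : ((n + 1) * (3 * (n + 1)).choose (n + 1) : ℚ)
      = (2 * n + 3) * (3 * (n + 1)).choose n := by
    exact_mod_cast Nat.succ_mul_choose_three_mul_succ n
  rw [Nat.add_sub_cancel, eq_div_iff (by positivity)]
  refine mul_left_cancel₀ (by positivity : (2 * n + 3 : ℚ) ≠ 0) ?_
  push_cast at hclosed ⊢
  linear_combination (n + 1 : ℚ) * hclosed + hchoose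

/-- The formal power series `η` with constant term 1 satisfying `t·η³ = η − 1`
has `n`-th coefficient `(1/n)·binom(3n, n−1)` for all `n ≥ 1`. -/
theorem ternary_tree_coeff (η : PowerSeries ℚ)
    (hη0 : PowerSeries.coeff 0 η = 1)
    (hη : PowerSeries.X * η ^ 3 = η - 1) :
    ∀ n : ℕ, 1 ≤ n →
      PowerSeries.coeff n η = (Nat.choose (3 * n) (n - 1) : ℚ) / n :=
  ternary_tree_coeff_general η hη
end

section
/- If f_n is defined by f_0 = 1 and f_n = Σ_{i=0}^{n-1} f_{n-1-i}·t_i with t_0 = 1 and t_i = (1/i)·binom(3i, i−1), then liminf_{n→∞} f_n^{1/n} = 27/4. -/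
/-!
Closing the recurrence `t_i = C(3i, i-1)/i` gives `t_m = C(3m, m)/(2m+1)`. The normalized
binomial `s_m = C(3m, m) (4/27)^m` has step ratio `2(3m+1)(3m+2) / (9(m+1)(2m+1))`, which
is squeezed between `(m+1)²/(m+2)²` and `√((m+1)/(m+2))`; so `1/(m+1)² ≤ s_m ≤ 1/√(m+1)`.

The upper bound makes `t_i (4/27)^i` dominated by the telescoping `1/√i - 1/√(i+1)`, so
`∑ t_i (4/27)^i ≤ 2 < 27/4` and the convolution recurrence propagates `f_n ≤ (27/4)^n`.
The lower bound together with `f_{m+1} ≥ f_0 t_m` gives `f_n ≥ (2/27) (27/4)^n / n³`.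
The `n`-th roots of both bounds tend to `27/4`.
-/

open Filter Topology Finset

theorem cast_choose_three_mul_pred_div {i : ℕ} (hi : 1 ≤ i) :
    ((3 * i).choose (i - 1) : ℝ) / i = (3 * i).choose i / (2 * i + 1) := by
  obtain ⟨m, rfl⟩ : ∃ m, i = m + 1 := ⟨i - 1, by omega⟩
  have h := Nat.choose_succ_right_eq (3 * (m + 1)) m
  rw [show 3 * (m + 1) - m = 2 * (m + 1) + 1 by omega] at h
  rw [Nat.add_sub_cancel, div_eq_div_iff (by positivity) (by positivity)]
  exact_mod_cast h.symm

noncomputable def scaledChoose (m : ℕ) : ℝ := (3 * m).choose m * (4 / 27) ^ m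

theorem scaledChoose_nonneg (m : ℕ) : 0 ≤ scaledChoose m := by
  unfold scaledChoose; positivity

theorem scaledChoose_mul_pow (m : ℕ) : scaledChoose m * (27 / 4) ^ m = (3 * m).choose m := by
  rw [scaledChoose, mul_assoc, ← mul_pow]; norm_num

theorem scaledChoose_succ (m : ℕ) :
    scaledChoose (m + 1) =
      scaledChoose m * (2 * ((3 * m + 1) * (3 * m + 2))) / (9 * ((m + 1) * (2 * m + 1))) := by
  -- Absorption identities climb `C(3m, m) → C(3m+1, m) → C(3m+2, m) → C(3m+3, m+1)`.
  have h₁ := congrArg (Nat.cast : ℕ → ℝ) (Nat.add_one_mul_choose_eq (3 * m + 2) m)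
  have h₂ := congrArg (Nat.cast : ℕ → ℝ) (Nat.choose_mul_succ_eq (3 * m + 1) m)
  have h₃ := congrArg (Nat.cast : ℕ → ℝ) (Nat.choose_mul_succ_eq (3 * m) m)
  rw [show 3 * m + 1 + 1 - m = 2 * m + 2 by omega] at h₂
  rw [show 3 * m + 1 - m = 2 * m + 1 by omega] at h₃
  rw [eq_div_iff (by positivity), scaledChoose, scaledChoose,
    show 3 * (m + 1) = 3 * m + 2 + 1 by ring, pow_succ]
  push_cast at h₁ h₂ h₃ ⊢
  linear_combination (-(4 / 3) * (2 * m + 1) * (4 / 27 : ℝ) ^ m) * h₁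
    - 2 * (2 * m + 1) * (4 / 27 : ℝ) ^ m * h₂ - 2 * (3 * m + 2) * (4 / 27 : ℝ) ^ m * h₃

theorem scaledChoose_sq_mul_le_one (m : ℕ) : scaledChoose m ^ 2 * (m + 1) ≤ 1 := by
  induction m with
  | zero => simp [scaledChoose]
  | succ m ih =>
    have hm : (0 : ℝ) ≤ m := m.cast_nonneg
    have hpoly : (2 * ((3 * m + 1) * (3 * m + 2))) ^ 2 * ((m : ℝ) + 2)
        ≤ (9 * ((m + 1) * (2 * m + 1))) ^ 2 * ((m : ℝ) + 1) := by
      nlinarith [pow_nonneg hm 3, sq_nonneg (m : ℝ)]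
    rw [scaledChoose_succ, div_pow, mul_pow, div_mul_eq_mul_div, div_le_one (by positivity)]
    push_cast
    nlinarith [mul_le_mul_of_nonneg_left hpoly (sq_nonneg (scaledChoose m)),
      mul_le_mul_of_nonneg_left ih (sq_nonneg (9 * (((m : ℝ) + 1) * (2 * m + 1))))]

theorem one_le_scaledChoose_mul_sq (m : ℕ) : 1 ≤ scaledChoose m * (m + 1) ^ 2 := by
  induction m with
  | zero => simp [scaledChoose]
  | succ m ih =>
    have hm : (0 : ℝ) ≤ m := m.cast_nonneg
    have hpoly : (9 * ((m + 1) * (2 * m + 1))) * ((m : ℝ) + 1) ^ 2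
        ≤ (2 * ((3 * m + 1) * (3 * m + 2))) * ((m : ℝ) + 2) ^ 2 := by
      nlinarith [pow_nonneg hm 3, sq_nonneg (m : ℝ)]
    rw [scaledChoose_succ, div_mul_eq_mul_div, one_le_div (by positivity)]
    push_cast
    nlinarith [mul_le_mul_of_nonneg_left hpoly (scaledChoose_nonneg m),
      mul_le_mul_of_nonneg_left ih (by positivity : (0 : ℝ) ≤ 9 * ((m + 1) * (2 * m + 1)))]

theorem scaledChoose_succ_div_le (k : ℕ) :
    scaledChoose (k + 1) / (2 * (k + 1 : ℕ) + 1) ≤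
      1 / √((k : ℝ) + 1) - 1 / √(((k + 1 : ℕ) : ℝ) + 1) := by
  set s := scaledChoose (k + 1)
  set u := √((k : ℝ) + 1)
  set v := √(((k + 1 : ℕ) : ℝ) + 1)
  have hu : 0 < u := by positivity
  have hv : 0 < v := by positivity
  have hu2 : u ^ 2 = k + 1 := Real.sq_sqrt (by positivity)
  have hv2 : v ^ 2 = k + 2 := by rw [Real.sq_sqrt (by positivity)]; push_cast; ring
  have huv : u ≤ v := Real.sqrt_le_sqrt (by push_cast; linarith)
  have hsv : s * v ≤ 1 := by
    refine (pow_le_one_iff_of_nonneg (mul_nonneg (scaledChoose_nonneg _) hv.le) two_ne_zero).1 ?_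
    rw [mul_pow, hv2]
    simpa [add_assoc, one_add_one_eq_two] using scaledChoose_sq_mul_le_one (k + 1)
  rw [div_sub_div _ _ hu.ne' hv.ne', div_le_div_iff₀ (by positivity) (by positivity)]
  push_cast
  -- `2k + 3 = u² + v²` and `v² - u² = 1` turn the claim into `0 ≤ (v - u)² v`.
  nlinarith [mul_nonneg (sq_nonneg (v - u)) hv.le, mul_le_mul_of_nonneg_left hsv hu.le]

theorem sum_scaledChoose_div_le_two (n : ℕ) :
    ∑ i ∈ range n, scaledChoose i / (2 * i + 1) ≤ 2 := by
  cases n with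
  | zero => simp
  | succ n =>
    have htel := sum_range_sub' (fun k : ℕ => 1 / √((k : ℝ) + 1)) n
    have hle : ∑ k ∈ range n, scaledChoose (k + 1) / (2 * (k + 1 : ℕ) + 1)
        ≤ ∑ k ∈ range n, (1 / √((k : ℝ) + 1) - 1 / √(((k + 1 : ℕ) : ℝ) + 1)) :=
      sum_le_sum fun k _ => scaledChoose_succ_div_le k
    have hlast : 0 ≤ 1 / √((n : ℝ) + 1) := by positivity
    have h0 : scaledChoose 0 / (2 * ((0 : ℕ) : ℝ) + 1) = 1 := by simp [scaledChoose]
    simp only [CharP.cast_eq_zero, zero_add, Real.sqrt_one, div_one] at htel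
    rw [sum_range_succ', h0]
    linarith

theorem tendsto_mul_pow_div_pow_rpow_one_div {a c : ℝ} (ha : 0 < a) (hc : 0 < c) (k : ℕ) :
    Tendsto (fun n : ℕ => (c * a ^ n / (n : ℝ) ^ k) ^ ((1 : ℝ) / n)) atTop (𝓝 a) := by
  have hc_root : Tendsto (fun n : ℕ => c ^ ((1 : ℝ) / n)) atTop (𝓝 1) := by
    simpa using tendsto_const_nhds.rpow tendsto_one_div_atTop_nhds_zero_nat (Or.inl hc.ne')
  have hn_root : Tendsto (fun n : ℕ => (n : ℝ) ^ ((1 : ℝ) / n)) atTop (𝓝 1) :=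
    tendsto_rpow_div.comp tendsto_natCast_atTop_atTop
  have hlim := (hc_root.mul_const a).div (hn_root.pow k) (by simp)
  rw [one_mul, one_pow, div_one] at hlim
  refine hlim.congr' ?_
  filter_upwards [eventually_ne_atTop 0] with n hn
  rw [Real.div_rpow (by positivity) (by positivity), Real.mul_rpow hc.le (by positivity),
    ← Real.rpow_pow_comm n.cast_nonneg, one_div, Real.pow_rpow_inv_natCast ha.le hn]
  simp only [Pi.div_apply, one_div]

theorem tendsto_rpow_one_div_of_le_of_le {x : ℕ → ℝ} {a c C : ℝ} (k : ℕ) (ha : 0 < a)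
    (hc : 0 < c) (hC : 0 < C) (hlow : ∀ n : ℕ, 1 ≤ n → c * a ^ n / (n : ℝ) ^ k ≤ x n)
    (hup : ∀ n, x n ≤ C * a ^ n) :
    Tendsto (fun n : ℕ => x n ^ ((1 : ℝ) / n)) atTop (𝓝 a) := by
  have hup_lim := tendsto_mul_pow_div_pow_rpow_one_div ha hC 0
  simp only [pow_zero, div_one] at hup_lim
  refine tendsto_of_tendsto_of_tendsto_of_le_of_le' (tendsto_mul_pow_div_pow_rpow_one_div ha hc k)
    hup_lim ?_ ?_ <;> filter_upwards [eventually_ge_atTop 1] with n hn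
  · exact Real.rpow_le_rpow (by positivity) (hlow n hn) (by positivity)
  · exact Real.rpow_le_rpow ((by positivity : (0 : ℝ) ≤ _).trans (hlow n hn)) (hup n)
      (by positivity)

section Convolution

variable {f t : ℕ → ℝ}

theorem nonneg_of_convolution (ht : ∀ i, 0 ≤ t i)
    (hrec : ∀ m, f (m + 1) = ∑ i ∈ range (m + 1), f (m - i) * t i)
    (hf0 : 0 ≤ f 0) (n : ℕ) : 0 ≤ f n := by
  induction n using Nat.strong_induction_on with
  | _ n ih =>
    cases n with
    | zero => exact hf0
    | succ m =>
      rw [hrec]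
      exact sum_nonneg fun i _ => mul_nonneg (ih _ (by omega)) (ht i)

theorem mul_le_of_convolution (ht : ∀ i, 0 ≤ t i)
    (hrec : ∀ m, f (m + 1) = ∑ i ∈ range (m + 1), f (m - i) * t i)
    (hf0 : 0 ≤ f 0) (m : ℕ) : f 0 * t m ≤ f (m + 1) := by
  have h := single_le_sum (f := fun i => f (m - i) * t i)
    (fun i _ => mul_nonneg (nonneg_of_convolution ht hrec hf0 _) (ht i))
    (self_mem_range_succ m)
  simpa [hrec] using h

theorem le_pow_of_convolution (ht : ∀ i, 0 ≤ t i)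
    (hrec : ∀ m, f (m + 1) = ∑ i ∈ range (m + 1), f (m - i) * t i)
    {a : ℝ} (ha : 0 < a) (hsum : ∀ n, ∑ i ∈ range n, t i / a ^ i ≤ a) (hf0 : f 0 ≤ 1)
    (n : ℕ) :
    f n ≤ a ^ n := by
  induction n using Nat.strong_induction_on with
  | _ n ih =>
    cases n with
    | zero => simpa using hf0
    | succ m =>
      have hterm : ∀ i ∈ range (m + 1), f (m - i) * t i ≤ a ^ m * (t i / a ^ i) := by
        intro i hi
        have hi : i ≤ m := Nat.lt_succ_iff.1 (mem_range.1 hi)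
        calc f (m - i) * t i ≤ a ^ (m - i) * t i :=
              mul_le_mul_of_nonneg_right (ih _ (by omega)) (ht i)
          _ = a ^ m * (t i / a ^ i) := by
              rw [pow_sub₀ a ha.ne' hi]; ring
      calc f (m + 1) ≤ ∑ i ∈ range (m + 1), a ^ m * (t i / a ^ i) := by
            rw [hrec]; exact sum_le_sum hterm
        _ = a ^ m * ∑ i ∈ range (m + 1), t i / a ^ i := by rw [mul_sum]
        _ ≤ a ^ (m + 1) := by
            rw [pow_succ]; exact mul_le_mul_of_nonneg_left (hsum _) (by positivity)

end Convolution

/-- If `f_0 = 1` and `f_n = Σ_{i=0}^{n-1} f_{n-1-i}·t_i` with `t_0 = 1` and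
`t_i = (1/i)·binom(3i, i−1)`, then `liminf f_n^{1/n} = 27/4`. -/
theorem liminf_f_root (t f : ℕ → ℝ)
    (ht0 : t 0 = 1)
    (ht : ∀ i : ℕ, 1 ≤ i → t i = (Nat.choose (3 * i) (i - 1) : ℝ) / i)
    (hf0 : f 0 = 1)
    (hf : ∀ n : ℕ, 1 ≤ n → f n = ∑ i ∈ Finset.range n, f (n - 1 - i) * t i) :
    Filter.liminf (fun n : ℕ => f n ^ ((1 : ℝ) / n)) atTop = 27 / 4 := by
  have ht_eq : ∀ m, t m = scaledChoose m * (27 / 4) ^ m / (2 * m + 1) := by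
    rintro (_ | m)
    · simp [ht0, scaledChoose]
    · rw [ht _ m.succ_pos, cast_choose_three_mul_pred_div m.succ_pos, scaledChoose_mul_pow]
  have ht_nonneg : ∀ m, 0 ≤ t m := fun m => by
    rw [ht_eq]; have := scaledChoose_nonneg m; positivity
  have hrec : ∀ m, f (m + 1) = ∑ i ∈ range (m + 1), f (m - i) * t i := fun m => by
    simpa using hf (m + 1) m.succ_pos
  have hsum : ∀ n, ∑ i ∈ range n, t i / (27 / 4) ^ i ≤ 27 / 4 := fun n => by
    have hterm : ∀ i, t i / (27 / 4) ^ i = scaledChoose i / (2 * i + 1) := fun i => by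
      rw [ht_eq]; field_simp
    simp only [hterm]
    linarith [sum_scaledChoose_div_le_two n]
  refine (tendsto_rpow_one_div_of_le_of_le 3 (by norm_num) (by norm_num : (0 : ℝ) < 2 / 27)
    one_pos (fun n hn => ?_) fun n => ?_).liminf_eq
  · obtain ⟨m, rfl⟩ : ∃ m, n = m + 1 := ⟨n - 1, by omega⟩
    have hlow := mul_le_of_convolution ht_nonneg hrec (hf0 ▸ zero_le_one) m
    rw [hf0, one_mul, ht_eq] at hlow
    refine le_trans ?_ hlow
    have hP : (0 : ℝ) ≤ (27 / 4) ^ m * (m + 1) := by positivity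
    rw [div_le_div_iff₀ (by positivity) (by positivity), pow_succ]
    push_cast
    nlinarith [mul_le_mul_of_nonneg_left (one_le_scaledChoose_mul_sq m) hP]
  · simpa using le_pow_of_convolution ht_nonneg hrec (by norm_num) hsum hf0.le n
end

section
/- Every permutation that avoids 42513 and contains 4231 contains an occurrence of 4231 in which the role of '4' is played by a left-to-right maximum. -/
/-- Every permutation avoiding 42513 and containing 4231 contains an occurrence of 4231
in which the '4' is a left-to-right maximum. -/
theorem contains_4231_ltr_max_of_avoid_42513 {n : ℕ} (π : Equiv.Perm (Fin n))
    (havoid : PermAvoids π (![3,1,4,0,2] : Fin 5 → Fin 5))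
    (hcont : PermContains π (![3,1,2,0] : Fin 4 → Fin 4)) :
    ∃ f : Fin 4 → Fin n, StrictMono f ∧
      (∀ a b : Fin 4, (![3,1,2,0] : Fin 4 → Fin 4) a < ![3,1,2,0] b ↔ π (f a) < π (f b)) ∧
      IsLtrMax π (f 0) := by
  obtain ⟨f, hf, hmatch⟩ := hcont
  -- pick m ≤ f 0 maximizing π
  obtain ⟨m, hmem, hmax⟩ := Finset.exists_max_image (Finset.Iic (f 0)) (fun i => π i)
    ⟨f 0, Finset.mem_Iic.mpr le_rfl⟩
  have hle : m ≤ f 0 := Finset.mem_Iic.mp hmem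
  have hπ0 : π (f 0) ≤ π m := hmax (f 0) (Finset.mem_Iic.mpr le_rfl)
  have v10 : π (f 1) < π (f 0) := (hmatch 1 0).mp (by decide)
  have v20 : π (f 2) < π (f 0) := (hmatch 2 0).mp (by decide)
  have v30 : π (f 3) < π (f 0) := (hmatch 3 0).mp (by decide)
  have v12 : π (f 1) < π (f 2) := (hmatch 1 2).mp (by decide)
  have v31 : π (f 3) < π (f 1) := (hmatch 3 1).mp (by decide)
  have v32 : π (f 3) < π (f 2) := (hmatch 3 2).mp (by decide)
  have w1 : π (f 1) < π m := v10.trans_le hπ0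
  have w2 : π (f 2) < π m := v20.trans_le hπ0
  have w3 : π (f 3) < π m := v30.trans_le hπ0
  have h01 : f 0 < f 1 := hf (by decide)
  have h12 : f 1 < f 2 := hf (by decide)
  have h23 : f 2 < f 3 := hf (by decide)
  clear hmatch havoid
  have pm1 : m < f 1 := hle.trans_lt h01
  have pm2 : m < f 2 := pm1.trans h12
  have pm3 : m < f 3 := pm2.trans h23
  have h13 : f 1 < f 3 := h12.trans h23
  refine ⟨![m, f 1, f 2, f 3], ?_, ?_, ?_⟩
  · intro a b hab
    fin_cases a <;> fin_cases b <;>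
      simp only [Matrix.cons_val_zero, Matrix.cons_val_one, Matrix.head_cons,
        Matrix.cons_val_two, Matrix.tail_cons, Matrix.cons_val_three] <;>
      first
        | assumption
        | exact absurd hab (by decide)
  · intro a b
    fin_cases a <;> fin_cases b <;>
      simp only [Matrix.cons_val_zero, Matrix.cons_val_one, Matrix.head_cons,
        Matrix.cons_val_two, Matrix.tail_cons, Matrix.cons_val_three] <;>
      refine ⟨fun hc => ?_, fun hc => ?_⟩ <;>
      first
        | assumption
        | decide
        | exact absurd hc (by decide)
        | exact absurd hc (lt_irrefl _)
        | exact absurd hc (asymm w1)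
        | exact absurd hc (asymm w2)
        | exact absurd hc (asymm w3)
        | exact absurd hc (asymm v12)
        | exact absurd hc (asymm v31)
        | exact absurd hc (asymm v32)
  · intro h' hlt
    have hm : h' ∈ Finset.Iic (f 0) := Finset.mem_Iic.mpr ((le_of_lt (by simpa using hlt)).trans hle)
    have : π h' ≤ π m := hmax h' hm
    refine lt_of_le_of_ne (by simpa using this) fun e => ?_
    exact absurd (π.injective (by simpa using e)) (by simpa using hlt.ne)
end
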